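/- arXiv:2307.05046 — 4 statements merged into one kernel-verified Lean document; each statement's English description precedes it below -/
import Mathlib

section
/- Let X₀ be a finite alphabet, ∼ a congruence (equivalence relation compatible with concatenation) on X₀*, and < a well-founded relation on X₀* that satisfies the congruence law (v < v′ implies u v w < u v′ w). Suppose there is a finite set of pairs {(uᵢ, vᵢ) : i ∈ I} with uᵢ < vᵢ and uᵢ ∼ vᵢ for all i, such that the language X₀* (⋃ᵢ vᵢ) X₀* (all words containing some vᵢ as a factor) is cofinite in X₀*. Then the quotient monoid X₀*/∼ is finite. -/
/-- If there is a finite set of equivalent pairs `(uᵢ, vᵢ)` with `uᵢ < vᵢ`, such that the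
language of words containing some `vᵢ` as a factor is cofinite, then the quotient of the
free monoid by the congruence `∼` is finite. -/
theorem finiteness_from_equations {A : Type} [Fintype A]
    (sim : List A → List A → Prop) (hsim : Equivalence sim)
    (hsimCong : ∀ u u' w w', sim u u' → sim (w ++ u ++ w') (w ++ u' ++ w'))
    (lt : List A → List A → Prop) (hwf : WellFounded lt)
    (hltCong : ∀ v v' u w, lt v v' → lt (u ++ v ++ w) (u ++ v' ++ w))
    (I : Type) [Finite I] (u v : I → List A)
    (hlt : ∀ i, lt (u i) (v i)) (heq : ∀ i, sim (u i) (v i))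
    (hcof : {w : List A | ¬ ∃ (i : I) (x y : List A), w = x ++ v i ++ y}.Finite) :
    Finite (Quotient (⟨sim, hsim⟩ : Setoid (List A))) := by
  set S : Set (List A) := {w : List A | ¬ ∃ (i : I) (x y : List A), w = x ++ v i ++ y} with hS
  have key : ∀ w : List A, ∃ w' ∈ S, sim w w' := by
    intro w
    induction w using hwf.induction with
    | _ w ih =>
      by_cases hw : ∃ (i : I) (x y : List A), w = x ++ v i ++ y
      · obtain ⟨i, x, y, rfl⟩ := hw
        have hlt' : lt (x ++ u i ++ y) (x ++ v i ++ y) := hltCong _ _ _ _ (hlt i)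
        obtain ⟨w', hw'S, hw'sim⟩ := ih _ hlt'
        exact ⟨w', hw'S, hsim.trans (hsim.symm (hsimCong _ _ _ _ (heq i))) hw'sim⟩
      · exact ⟨w, hw, hsim.refl w⟩
  have : Finite S := hcof.to_subtype
  apply Finite.of_surjective (fun s : S => (Quotient.mk _ s.1 :
    Quotient (⟨sim, hsim⟩ : Setoid (List A))))
  intro q
  obtain ⟨w, rfl⟩ := Quotient.exists_rep q
  obtain ⟨w', hw'S, hw'sim⟩ := key w
  exact ⟨⟨w', hw'S⟩, Quotient.sound (hsim.symm hw'sim)⟩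
end

section
/- Let X₀ be a finite alphabet, ∼ a congruence on X₀*, and < a well-founded relation on X₀* satisfying the congruence law and having no infinite antichains. If the quotient X₀*/∼ is finite, then there exists a finite set of pairs {(uᵢ, vᵢ) : i ∈ I} with uᵢ < vᵢ and uᵢ ∼ vᵢ such that the language X₀* (⋃ᵢ vᵢ) X₀* is cofinite. -/
/-- If the quotient of the free monoid by the congruence `∼` is finite, and `<` is a
well-founded relation satisfying the congruence law and having no infinite antichains,
then there is a finite set of equivalent pairs `(uᵢ, vᵢ)` with `uᵢ < vᵢ` such that the
language of words containing some `vᵢ` as a factor is cofinite. -/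
theorem equations_from_finiteness {A : Type} [Fintype A]
    (sim : List A → List A → Prop) (hsim : Equivalence sim)
    (hsimCong : ∀ u u' w w', sim u u' → sim (w ++ u ++ w') (w ++ u' ++ w'))
    (lt : List A → List A → Prop) (hwf : WellFounded lt)
    (hltCong : ∀ v v' u w, lt v v' → lt (u ++ v ++ w) (u ++ v' ++ w))
    (hantichain : ¬ ∃ S : Set (List A), S.Infinite ∧
      ∀ a ∈ S, ∀ b ∈ S, a ≠ b → ¬ lt a b ∧ ¬ lt b a)
    (hfin : Finite (Quotient (⟨sim, hsim⟩ : Setoid (List A)))) :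
    ∃ P : Finset (List A × List A),
      (∀ p ∈ P, lt p.1 p.2 ∧ sim p.1 p.2) ∧
      {w : List A | ¬ ∃ p ∈ P, ∃ x y : List A, w = x ++ p.2 ++ y}.Finite := by
  classical
  set st : Setoid (List A) := ⟨sim, hsim⟩ with hst
  -- B : words with no factor equivalent to a smaller word
  set B : Set (List A) := {w | ∀ v, v <:+: w → ¬∃ u, lt u v ∧ sim u v} with hBdef
  have hnotB : ∀ w, w ∉ B → ∃ v, v <:+: w ∧ ∃ u, lt u v ∧ sim u v := by
    intro w hw
    by_contra h
    push_neg at h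
    exact hw (fun v hv hex => hex.elim (fun u hu => h v hv u hu.1 hu.2))
  have hBfin : B.Finite := by
    by_contra hB
    haveI : Finite (Quotient st) := hfin
    have hfib : ∃ c : Quotient st, {w ∈ B | Quotient.mk st w = c}.Infinite := by
      by_contra h
      push_neg at h
      have hsub : B ⊆ ⋃ c : Quotient st, {w ∈ B | Quotient.mk st w = c} := fun w hw =>
        Set.mem_iUnion.2 ⟨Quotient.mk st w, hw, rfl⟩
      exact hB ((Set.finite_iUnion h).subset hsub)
    obtain ⟨c, hc⟩ := hfib
    have hnotanti : ¬ ∀ a ∈ {w ∈ B | Quotient.mk st w = c},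
        ∀ b ∈ {w ∈ B | Quotient.mk st w = c}, a ≠ b → ¬ lt a b ∧ ¬ lt b a :=
      fun h => hantichain ⟨_, hc, h⟩
    push_neg at hnotanti
    obtain ⟨a, ha, b, hb, hne, hcomp⟩ := hnotanti
    have hsimab : sim a b := Quotient.exact (ha.2.trans hb.2.symm)
    have hsimba : sim b a := hsim.symm hsimab
    by_cases hab : lt a b
    · exact hb.1 b (List.infix_refl b) ⟨a, hab, hsimab⟩
    · by_cases hba : lt b a
      · exact ha.1 a (List.infix_refl a) ⟨b, hba, hsimba⟩
      · exact hba (hcomp hab)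
  -- V : minimal words outside B
  set V : Set (List A) := {v | v ∉ B ∧ ∀ v', v' <:+: v → v' ≠ v → v' ∈ B} with hVdef
  have hVfin : V.Finite := by
    have hsub : V ⊆ insert ([] : List A)
        ((fun p : List A × A => p.1 ++ [p.2]) '' (B ×ˢ Set.univ)) := by
      intro v hv
      rcases eq_or_ne v [] with rfl | hne
      · exact Set.mem_insert _ _
      · refine Set.mem_insert_of_mem _ ?_
        have hd : v.dropLast ++ [v.getLast hne] = v := List.dropLast_append_getLast hne
        have hinf : v.dropLast <:+: v := List.IsPrefix.isInfix ⟨[v.getLast hne], hd⟩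
        have hlen : v.dropLast.length < v.length := by
          rw [List.length_dropLast]
          exact Nat.sub_lt (List.length_pos_iff.2 hne) one_pos
        have hdne : v.dropLast ≠ v := fun h => absurd (congrArg List.length h) (Nat.ne_of_lt hlen)
        exact ⟨(v.dropLast, v.getLast hne), ⟨hv.2 _ hinf hdne, Set.mem_univ _⟩, hd⟩
    exact (Set.Finite.insert _ ((hBfin.prod Set.finite_univ).image _)).subset hsub
  have hVwit : ∀ v ∈ V, ∃ u, lt u v ∧ sim u v := by
    intro v hv
    obtain ⟨v₂, hv₂, u, hu⟩ := hnotB v hv.1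
    have hv₂notB : v₂ ∉ B := fun h => h v₂ (List.infix_refl v₂) ⟨u, hu⟩
    rcases eq_or_ne v₂ v with rfl | hne
    · exact ⟨u, hu⟩
    · exact absurd (hv.2 v₂ hv₂ hne) hv₂notB
  -- every word outside B has a factor in V
  have key : ∀ n, ∀ w : List A, w.length ≤ n → w ∉ B → ∃ v ∈ V, v <:+: w := by
    intro n
    induction n using Nat.strong_induction_on with
    | _ n ih =>
      intro w hwn hwB
      obtain ⟨v, hvw, u, hu⟩ := hnotB w hwB
      have hvnotB : v ∉ B := fun h => h v (List.infix_refl v) ⟨u, hu⟩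
      by_cases hmin : ∀ v', v' <:+: v → v' ≠ v → v' ∈ B
      · exact ⟨v, ⟨hvnotB, hmin⟩, hvw⟩
      · push_neg at hmin
        obtain ⟨v', hv'v, hne, hv'B⟩ := hmin
        have hlt : v'.length < n := by
          have h1 : v'.length ≤ v.length := hv'v.length_le
          have h2 : v'.length ≠ v.length := fun h => hne (hv'v.eq_of_length h)
          have h3 : v.length ≤ w.length := hvw.length_le
          omega
        obtain ⟨v'', hv''V, hv''⟩ := ih v'.length hlt v' le_rfl hv'B
        exact ⟨v'', hv''V, hv''.trans (hv'v.trans hvw)⟩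
  -- construct P
  set g : List A → List A × List A :=
    fun v => if h : ∃ u, lt u v ∧ sim u v then (h.choose, v) else (v, v) with hg
  refine ⟨hVfin.toFinset.image g, ?_, ?_⟩
  · intro p hp
    rw [Finset.mem_image] at hp
    obtain ⟨v, hv, rfl⟩ := hp
    rw [Set.Finite.mem_toFinset] at hv
    have h := hVwit v hv
    simp only [hg, dif_pos h]
    exact h.choose_spec
  · refine hBfin.subset ?_
    intro w hw
    by_contra hwB
    obtain ⟨v, hvV, x, y, hxy⟩ := key w.length w le_rfl hwB
    have h := hVwit v hvV
    refine hw ⟨g v, Finset.mem_image.2 ⟨v, (Set.Finite.mem_toFinset _).2 hvV, rfl⟩, x, y, ?_⟩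
    simp only [hg, dif_pos h]
    exact hxy.symm
end

section
/- Let T be a subterm-closed set of CoR terms and m ≥ 1. Then the quotient of T by semantic equivalence over all structures is finite if and only if the quotient of T by semantic equivalence over all structures of size ≥ m is finite. -/
/-- Terms of the calculus of relations over variables `V`. -/
inductive CoR (V : Type) : Type
  | var : V → CoR V
  | bot : CoR V
  | top : CoR V
  | ident : CoR V
  | diff : CoR V
  | union : CoR V → CoR V → CoR V
  | inter : CoR V → CoR V → CoR V
  | compl : CoR V → CoR V
  | comp : CoR V → CoR V → CoR V
  | dagger : CoR V → CoR V → CoR V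
  | proj : (Fin 2 → Fin 2) → CoR V → CoR V

/-- Standard relational semantics of CoR terms on a set `M`, under a valuation `ρ`. -/
def denote {V M : Type} (ρ : V → Set (M × M)) : CoR V → Set (M × M)
  | .var a => ρ a
  | .bot => ∅
  | .top => Set.univ
  | .ident => {p | p.1 = p.2}
  | .diff => {p | p.1 ≠ p.2}
  | .union t s => denote ρ t ∪ denote ρ s
  | .inter t s => denote ρ t ∩ denote ρ s
  | .compl t => (denote ρ t)ᶜ
  | .comp t s => {p | ∃ z, (p.1, z) ∈ denote ρ t ∧ (z, p.2) ∈ denote ρ s}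
  | .dagger t s => {p | ∀ z, (p.1, z) ∈ denote ρ t ∨ (z, p.2) ∈ denote ρ s}
  | .proj π t => {p | ((fun i : Fin 2 => if i = 0 then p.1 else p.2) (π 0),
                      (fun i : Fin 2 => if i = 0 then p.1 else p.2) (π 1)) ∈ denote ρ t}

/-- Semantic equivalence over all (nonempty) structures. -/
def equivAll {V : Type} (t₁ t₂ : CoR V) : Prop :=
  ∀ (M : Type), Nonempty M → ∀ ρ : V → Set (M × M), denote ρ t₁ = denote ρ t₂

/-- Semantic equivalence over all structures with at least `m` elements. -/
def equivGe {V : Type} (m : ℕ) (t₁ t₂ : CoR V) : Prop :=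
  ∀ (M : Type), Nonempty M → (∃ f : Fin m → M, Function.Injective f) →
    ∀ ρ : V → Set (M × M), denote ρ t₁ = denote ρ t₂

/-- The setoid of `equivAll` restricted to a set `T` of terms. -/
def setoidAll {V : Type} (T : Set (CoR V)) : Setoid T where
  r x y := equivAll x.1 y.1
  iseqv := ⟨fun _ _ _ _ => rfl, fun h M h1 ρ => (h M h1 ρ).symm,
    fun h h' M h1 ρ => (h M h1 ρ).trans (h' M h1 ρ)⟩

/-- The setoid of `equivGe m` restricted to a set `T` of terms. -/
def setoidGe {V : Type} (m : ℕ) (T : Set (CoR V)) : Setoid T where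
  r x y := equivGe m x.1 y.1
  iseqv := ⟨fun _ _ _ _ _ => rfl, fun h M h1 h2 ρ => (h M h1 h2 ρ).symm,
    fun h h' M h1 h2 ρ => (h M h1 h2 ρ).trans (h' M h1 h2 ρ)⟩

/-- A set of CoR terms is subterm-closed. -/
def SubtermClosed {V : Type} (T : Set (CoR V)) : Prop :=
  (∀ t s, CoR.union t s ∈ T → t ∈ T ∧ s ∈ T) ∧
  (∀ t s, CoR.inter t s ∈ T → t ∈ T ∧ s ∈ T) ∧
  (∀ t s, CoR.comp t s ∈ T → t ∈ T ∧ s ∈ T) ∧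
  (∀ t s, CoR.dagger t s ∈ T → t ∈ T ∧ s ∈ T) ∧
  (∀ t, CoR.compl t ∈ T → t ∈ T) ∧
  (∀ π t, CoR.proj π t ∈ T → t ∈ T)

lemma denote_equiv {V M N : Type} (e : N ≃ M) (ρ : V → Set (M × M)) (t : CoR V) :
    denote (fun v => {p : N × N | (e p.1, e p.2) ∈ ρ v}) t
      = {p : N × N | (e p.1, e p.2) ∈ denote ρ t} := by
  induction t with
  | var a => rfl
  | bot => ext p; simp [denote]
  | top => ext p; simp [denote]
  | ident => ext p; simp [denote, e.injective.eq_iff]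
  | diff => ext p; simp [denote, e.injective.eq_iff]
  | union t s iht ihs => ext p; simp [denote, iht, ihs]
  | inter t s iht ihs => ext p; simp [denote, iht, ihs]
  | compl t iht => ext p; simp [denote, iht]
  | comp t s iht ihs =>
    ext p
    simp only [denote, iht, ihs, Set.mem_setOf_eq]
    constructor
    · rintro ⟨z, h1, h2⟩; exact ⟨e z, h1, h2⟩
    · rintro ⟨w, h1, h2⟩
      exact ⟨e.symm w, by simpa using h1, by simpa using h2⟩
  | dagger t s iht ihs =>
    ext p
    simp only [denote, iht, ihs, Set.mem_setOf_eq]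
    constructor
    · intro h w; have := h (e.symm w); simpa using this
    · intro h z; exact h (e z)
  | proj π t iht =>
    ext p
    simp only [denote, iht, Set.mem_setOf_eq]
    have h0 : ∀ i : Fin 2,
        e ((fun i : Fin 2 => if i = 0 then p.1 else p.2) i)
          = (fun i : Fin 2 => if i = 0 then e p.1 else e p.2) i := by
      intro i; by_cases hi : i = 0 <;> simp [hi]
    rw [h0 (π 0), h0 (π 1)]

lemma equivAll_of {V : Type} {m : ℕ} {t s : CoR V}
    (hGe : equivGe m t s)
    (hSm : ∀ k : Fin m, ∀ ρ : V → Set (Fin (k.1 + 1) × Fin (k.1 + 1)),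
      denote ρ t = denote ρ s) :
    equivAll t s := by
  intro M hne ρ
  by_cases hinj : ∃ f : Fin m → M, Function.Injective f
  · exact hGe M hne hinj ρ
  · have hfin : Finite M := by
      by_contra hinf
      rw [not_finite_iff_infinite] at hinf
      exact hinj ⟨fun i => Infinite.natEmbedding M i.1,
        (Infinite.natEmbedding M).injective.comp Fin.val_injective⟩
    have hn1 : 1 ≤ Nat.card M :=
      Nat.one_le_iff_ne_zero.mpr (Nat.card_ne_zero.mpr ⟨hne, hfin⟩)
    have hnm : Nat.card M < m := by
      by_contra hle
      push_neg at hle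
      exact hinj ⟨fun i => (Finite.equivFin M).symm (Fin.castLE hle i),
        (Finite.equivFin M).symm.injective.comp (Fin.castLE_injective hle)⟩
    have hk : Nat.card M - 1 < m := by omega
    have hkn : (⟨Nat.card M - 1, hk⟩ : Fin m).1 + 1 = Nat.card M := by
      simp only []; omega
    let e : Fin ((⟨Nat.card M - 1, hk⟩ : Fin m).1 + 1) ≃ M :=
      (finCongr hkn).trans (Finite.equivFin M).symm
    have key := hSm ⟨Nat.card M - 1, hk⟩ (fun v => {p | (e p.1, e p.2) ∈ ρ v})
    rw [denote_equiv e ρ t, denote_equiv e ρ s] at key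
    ext p
    have := Set.ext_iff.mp key (e.symm p.1, e.symm p.2)
    simpa using this

/-- For a subterm-closed set `T` of CoR terms and `m ≥ 1`, the quotient of `T` by
semantic equivalence over all structures is finite iff the quotient of `T` by semantic
equivalence over all structures of size at least `m` is finite. -/
theorem finite_quotient_iff_ge {V : Type} [Fintype V]
    (T : Set (CoR V)) (hT : SubtermClosed T) (m : ℕ) (hm : 1 ≤ m) :
    Finite (Quotient (setoidAll T)) ↔ Finite (Quotient (setoidGe m T)) := by
  constructor
  · intro h
    have hs : Function.Surjective
        (Quotient.map' (id : T → T)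
          (fun a b (hab : equivAll a.1 b.1) M h1 _ ρ => hab M h1 ρ) :
          Quotient (setoidAll T) → Quotient (setoidGe m T)) := by
      intro q
      induction q using Quotient.ind with
      | _ a => exact ⟨Quotient.mk _ a, rfl⟩
    exact Finite.of_surjective _ hs
  · intro h
    let F : Quotient (setoidAll T) → Quotient (setoidGe m T) ×
        (∀ k : Fin m, (V → Set (Fin (k.1 + 1) × Fin (k.1 + 1))) →
          Set (Fin (k.1 + 1) × Fin (k.1 + 1))) :=
      Quotient.lift
        (fun a : T => (Quotient.mk (setoidGe m T) a, fun k ρ => denote ρ a.1))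
        (by
          intro a b (hab : equivAll a.1 b.1)
          refine Prod.ext (Quotient.sound (fun M h1 _ ρ => hab M h1 ρ)) ?_
          funext k ρ
          exact hab _ ⟨0⟩ ρ)
    have hF : Function.Injective F := by
      intro q1 q2 hq
      induction q1 using Quotient.ind with
      | _ a =>
      induction q2 using Quotient.ind with
      | _ b =>
      have h1 : Quotient.mk (setoidGe m T) a = Quotient.mk (setoidGe m T) b :=
        congrArg Prod.fst hq
      have h2 := congrArg Prod.snd hq
      refine Quotient.sound (equivAll_of (Quotient.exact h1) ?_)
      intro k ρ
      exact congrFun (congrFun h2 k) ρ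
    exact Finite.of_injective F hF
end

section
/- For every binary relation R on a set W with at least 4 elements, and every pair (x,y) ∈ W²: (∃z, (x,z) ∈ R) if and only if (x,y) ∈ ((R·D) ∩ D)·D, where D is the inequality relation on W. Equivalently, R·D·D = ((R·D) ∩ D)·D holds over all structures of size ≥ 4 (equation c_D c_D = c_D i_D c_D). -/
/-- Relational composition. -/
def rcomp {W : Type} (R S : Set (W × W)) : Set (W × W) :=
  {p | ∃ z, (p.1, z) ∈ R ∧ (z, p.2) ∈ S}

/-- The identity relation on `W`. -/
def idRel' {W : Type} : Set (W × W) := {p | p.1 = p.2}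

/-- The difference (inequality) relation on `W`. -/
def diffRel {W : Type} : Set (W × W) := {p | p.1 ≠ p.2}

/-- The converse of a relation. -/
def rconv {W : Type} (R : Set (W × W)) : Set (W × W) := {p | (p.2, p.1) ∈ R}

lemma exists_ne3 {W : Type} (h : ∃ f : Fin 4 → W, Function.Injective f)
    (a b c : W) : ∃ w : W, w ≠ a ∧ w ≠ b ∧ w ≠ c := by
  classical
  obtain ⟨f, hf⟩ := h
  by_contra hc
  push_neg at hc
  have hmem : ∀ i : Fin 4, f i = a ∨ f i = b ∨ f i = c := by
    intro i
    by_contra hi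
    push_neg at hi
    exact hi.2.2 (hc (f i) hi.1 hi.2.1)
  have hsub : (Finset.univ.image f) ⊆ ({a, b, c} : Finset W) := by
    intro x hx
    simp only [Finset.mem_image, Finset.mem_univ, true_and] at hx
    obtain ⟨i, rfl⟩ := hx
    simp only [Finset.mem_insert, Finset.mem_singleton]
    exact hmem i
  have h4 : (Finset.univ.image f).card = 4 := by
    rw [Finset.card_image_of_injective _ hf]; simp
  have hle := Finset.card_le_card hsub
  have h3 : ({a, b, c} : Finset W).card ≤ 3 := by
    apply le_trans (Finset.card_insert_le _ _)
    apply Nat.succ_le_succ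
    apply le_trans (Finset.card_insert_le _ _)
    simp
  omega

/-- Over a set with at least 4 elements: `(x,y) ∈ ((R·D) ∩ D)·D` iff `∃z, (x,z) ∈ R`;
equivalently `R·D·D = ((R·D) ∩ D)·D`. -/
theorem eq_cDcD_cDiDcD {W : Type} (h : ∃ f : Fin 4 → W, Function.Injective f)
    (R : Set (W × W)) :
    (∀ x y : W, (∃ z, (x, z) ∈ R) ↔ (x, y) ∈ rcomp (rcomp R diffRel ∩ diffRel) diffRel) ∧
    rcomp (rcomp R diffRel) diffRel = rcomp (rcomp R diffRel ∩ diffRel) diffRel := by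
  have key : ∀ x y : W, (∃ z, (x, z) ∈ R) ↔
      (x, y) ∈ rcomp (rcomp R diffRel ∩ diffRel) diffRel := by
    intro x y
    constructor
    · rintro ⟨z, hz⟩
      obtain ⟨w, hwz, hwx, hwy⟩ := exists_ne3 h z x y
      exact ⟨w, ⟨⟨z, hz, fun e => hwz e.symm⟩, fun e => hwx e.symm⟩, hwy⟩
    · rintro ⟨w, ⟨⟨z, hz, _⟩, _⟩, _⟩
      exact ⟨z, hz⟩
  refine ⟨key, ?_⟩
  ext ⟨x, y⟩
  constructor
  · rintro ⟨w, ⟨z, hz, _⟩, _⟩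
    exact (key x y).1 ⟨z, hz⟩
  · rintro hxy
    obtain ⟨z, hz⟩ := (key x y).2 hxy
    obtain ⟨w, hwz, _, hwy⟩ := exists_ne3 h z y y
    exact ⟨w, ⟨z, hz, fun e => hwz e.symm⟩, hwy⟩
end
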